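/- Let G be a connected finite undirected multigraph with s, t ∈ V(G), s ≠ t, let λ = λ_G(s,t), and let W_0, …, W_{q+1} be the bundles of G with the inter-bundle cuts C'_0, …, C'_q. Then each bundle W_i induces a subgraph G[W_i] with at most λ connected components; for 1 ≤ i ≤ q, each connected component of G[W_i] is incident with some number c ≥ 1 of edges of C'_{i−1} and with exactly c edges of C'_i; moreover W_0 is incident with all λ edges of C'_0 and W_{q+1} is incident with all λ edges of C'_q. -/

import Mathlib

/-!
A finite undirected multigraph (parallel edges allowed, no loops) is modelled by a
vertex type `V`, an edge type `E` (both finite) and an endpoint map `ends : E → Sym2 V`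
such that no edge is a loop (`¬ (ends e).IsDiag`).
-/

namespace FlowAug

variable {V E : Type}

/-- Two vertices are adjacent in `G - X` if some edge outside `X` joins them. -/
def Adj (ends : E → Sym2 V) (X : Set E) (u v : V) : Prop :=
  ∃ e, e ∉ X ∧ ends e = s(u, v)

/-- Reachability in `G - X`. -/
def Reach (ends : E → Sym2 V) (X : Set E) : V → V → Prop :=
  Relation.ReflTransGen (Adj ends X)

/-- `R_S(X)` : the set of vertices reachable from the vertex set `S` in `G - X`. -/
def RS (ends : E → Sym2 V) (X : Set E) (S : Set V) : Set V :=
  {v | ∃ u ∈ S, Reach ends X u v}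

/-- `δ(S)` : the set of edges with exactly one endpoint in `S`. -/
def edgeBoundary (ends : E → Sym2 V) (S : Set V) : Set E :=
  {e | ∃ u v, ends e = s(u, v) ∧ u ∈ S ∧ v ∉ S}

/-- `X` is an `(S,T)`-cut. -/
def IsCut (ends : E → Sym2 V) (X : Set E) (S T : Set V) : Prop :=
  RS ends X S ∩ RS ends X T = ∅

/-- `X` is a minimal `(S,T)`-cut: no proper subset of `X` is an `(S,T)`-cut. -/
def IsMinimalCut (ends : E → Sym2 V) (X : Set E) (S T : Set V) : Prop :=
  IsCut ends X S T ∧ ∀ Y : Set E, Y ⊂ X → ¬ IsCut ends Y S T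

/-- `X` is an `(S,T)`-cut of minimum cardinality. -/
def IsMinimumCut (ends : E → Sym2 V) (X : Set E) (S T : Set V) : Prop :=
  IsCut ends X S T ∧ ∀ Y : Set E, IsCut ends Y S T → X.ncard ≤ Y.ncard

/-- `X` is an `(S,T)`-cut that is closest to `S`: every `(S,T)`-cut `X' ≠ X` with
`R_S(X') ⊆ R_S(X)` satisfies `|X'| > |X|`. -/
def IsClosestCut (ends : E → Sym2 V) (X : Set E) (S T : Set V) : Prop :=
  IsCut ends X S T ∧
    ∀ X' : Set E, IsCut ends X' S T → X' ≠ X →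
      RS ends X' S ⊆ RS ends X S → X.ncard < X'.ncard

/-- `λ_G(s,t)` : the minimum cardinality of an `(s,t)`-cut (equivalently, by Menger's
theorem, the maximum number of pairwise edge-disjoint `(s,t)`-paths). -/
noncomputable def lamCut (ends : E → Sym2 V) (s t : V) : ℕ :=
  sInf {n | ∃ X : Set E, IsCut ends X {s} {t} ∧ X.ncard = n}

/-- `Z_{s,t}` : the edges of `Z` with one endpoint in `R_s(Z)` and one in `R_t(Z)`. -/
def Zst (ends : E → Sym2 V) (s t : V) (Z : Set E) : Set E :=
  {e | e ∈ Z ∧ ∃ u v, ends e = s(u, v) ∧ u ∈ RS ends Z {s} ∧ v ∈ RS ends Z {t}}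

/-- `Z` is a special `(s,t)`-cut: `Z` is an `(s,t)`-cut and `Z_{s,t}` is an `(s,t)`-cut. -/
def IsSpecial (ends : E → Sym2 V) (s t : V) (Z : Set E) : Prop :=
  IsCut ends Z {s} {t} ∧ IsCut ends (Zst ends s t Z) {s} {t}

/-- `Z` is eligible for `(s,t)`: special, and every edge of `Z` has its endpoints in
different connected components of `G - Z`. -/
def IsEligible (ends : E → Sym2 V) (s t : V) (Z : Set E) : Prop :=
  IsSpecial ends s t Z ∧ ∀ e ∈ Z, ∀ u v : V, ends e = s(u, v) → ¬ Reach ends Z u v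

/-- `Z` is a star `(s,t)`-cut: an `(s,t)`-cut each of whose edges has exactly one
endpoint in `R_s(Z)`. -/
def IsStarCut (ends : E → Sym2 V) (s t : V) (Z : Set E) : Prop :=
  IsCut ends Z {s} {t} ∧
    ∀ e ∈ Z, ∃ u v : V, ends e = s(u, v) ∧ u ∈ RS ends Z {s} ∧ v ∉ RS ends Z {s}

/-- A path from `s` to `t` in the multigraph described by `ends`, given by its
sequence of vertices and traversed edges. -/
structure MGPath (V E : Type) (ends : E → Sym2 V) (s t : V) where
  n : ℕ
  vert : Fin (n + 1) → V
  edge : Fin n → E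
  vert_zero : vert 0 = s
  vert_last : vert (Fin.last n) = t
  ends_eq : ∀ i : Fin n, ends (edge i) = s(vert i.castSucc, vert i.succ)

/-- A family of paths is (pairwise) edge-disjoint: no edge is used twice, neither on
a single path nor on two different paths. -/
def EdgeDisjoint {ends : E → Sym2 V} {s t : V} {k : ℕ}
    (P : Fin k → MGPath V E ends s t) : Prop :=
  Function.Injective fun p : (Σ i : Fin k, Fin (P i).n) => (P p.1).edge p.2

/-- `P` is a witnessing `(s,t)`-flow for `Z`: a family of `λ_G(s,t)` pairwise
edge-disjoint `(s,t)`-paths such that every edge of `Z_{s,t}` occurs on a path of `P`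
and every path of `P` contains exactly one edge of `Z`. -/
def IsWitnessingFlow (ends : E → Sym2 V) (s t : V) (Z : Set E) {k : ℕ}
    (P : Fin k → MGPath V E ends s t) : Prop :=
  k = lamCut ends s t ∧ EdgeDisjoint P ∧
    (∀ e ∈ Zst ends s t Z, ∃ (i : Fin k) (j : Fin (P i).n), (P i).edge j = e) ∧
    ∀ i : Fin k, ∃! j : Fin (P i).n, (P i).edge j ∈ Z

/-- The vertices occurring on the paths of a family `P`. -/
def pathVerts {ends : E → Sym2 V} {s t : V} {k : ℕ}
    (P : Fin k → MGPath V E ends s t) : Set V :=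
  {v | ∃ (i : Fin k) (m : Fin ((P i).n + 1)), (P i).vert m = v}

/-- The edges occurring on the paths of a family `P`. -/
def pathEdges {ends : E → Sym2 V} {s t : V} {k : ℕ}
    (P : Fin k → MGPath V E ends s t) : Set E :=
  {e | ∃ (i : Fin k) (j : Fin (P i).n), (P i).edge j = e}

/-- The arcs obtained by orienting every edge of every path of `P` in the forward
direction (from `s` towards `t`). -/
def DirAdjOnFlow {ends : E → Sym2 V} {s t : V} {k : ℕ}
    (P : Fin k → MGPath V E ends s t) (u v : V) : Prop :=
  ∃ (i : Fin k) (l : Fin (P i).n), (P i).vert l.castSucc = u ∧ (P i).vert l.succ = v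

/-- `N[S]` : the closed neighborhood of `S`. -/
def closedNbhd (ends : E → Sym2 V) (S : Set V) : Set V :=
  S ∪ {v | ∃ u ∈ S, ∃ e : E, ends e = s(u, v)}

/-- `X` is the minimum `(s,t)`-cut closest to `s` among all minimum `(s,t)`-cuts
satisfying the property `P`. -/
def IsClosestMinCutAmong (ends : E → Sym2 V) (s t : V) (P : Set E → Prop)
    (X : Set E) : Prop :=
  IsMinimumCut ends X {s} {t} ∧ P X ∧
    ∀ Y : Set E, IsMinimumCut ends Y {s} {t} → P Y → Y ≠ X →
      RS ends Y {s} ⊆ RS ends X {s} → X.ncard < Y.ncard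

/-- `C 0, …, C p` is the canonical sequence of non-crossing minimum `(s,t)`-cuts:
`C 0` is the unique minimum `(s,t)`-cut closest to `s`; `C i` is the unique minimum
`(s,t)`-cut closest to `s` among all minimum `(s,t)`-cuts `X` with
`N[R_s(C (i-1))] ⊆ R_s(X)`; and `p` is the largest index for which such a cut exists. -/
def CanonSeq (ends : E → Sym2 V) (s t : V) (p : ℕ) (C : ℕ → Set E) : Prop :=
  IsClosestMinCutAmong ends s t (fun _ => True) (C 0) ∧
    (∀ i : ℕ, 0 < i → i ≤ p →
      IsClosestMinCutAmong ends s t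
        (fun X => closedNbhd ends (RS ends (C (i - 1)) {s}) ⊆ RS ends X {s}) (C i)) ∧
    ¬ ∃ X : Set E, IsMinimumCut ends X {s} {t} ∧
        closedNbhd ends (RS ends (C p) {s}) ⊆ RS ends X {s}

/-- The blocks `V_0, …, V_{p+1}` associated with the canonical sequence of cuts. -/
def blockOf (ends : E → Sym2 V) (s : V) (p : ℕ) (C : ℕ → Set E) (i : ℕ) : Set V :=
  if i = 0 then RS ends (C 0) {s}
  else if i ≤ p then RS ends (C i) {s} \ RS ends (C (i - 1)) {s}
  else Set.univ \ RS ends (C p) {s}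

/-- Adjacency inside the induced subgraph `G[B]`. -/
def AdjIn (ends : E → Sym2 V) (B : Set V) (u v : V) : Prop :=
  u ∈ B ∧ v ∈ B ∧ ∃ e : E, ends e = s(u, v)

/-- Reachability inside the induced subgraph `G[B]`. -/
def ReachIn (ends : E → Sym2 V) (B : Set V) : V → V → Prop :=
  Relation.ReflTransGen (AdjIn ends B)

/-- The induced subgraph `G[B]` is connected. -/
def ConnIn (ends : E → Sym2 V) (B : Set V) : Prop :=
  ∀ u ∈ B, ∀ v ∈ B, ReachIn ends B u v

/-- The connected component of `u` in the induced subgraph `G[B]`. -/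
def compIn (ends : E → Sym2 V) (B : Set V) (u : V) : Set V :=
  {v | v ∈ B ∧ ReachIn ends B u v}

/-- The set of connected components of the induced subgraph `G[B]`. -/
def componentsIn (ends : E → Sym2 V) (B : Set V) : Set (Set V) :=
  {K | ∃ u ∈ B, K = compIn ends B u}

/-- The union of the blocks `V_a, …, V_b`. -/
def unionBlocks (ends : E → Sym2 V) (s : V) (p : ℕ) (C : ℕ → Set E)
    (a b : ℕ) : Set V :=
  ⋃ j ∈ Set.Icc a b, blockOf ends s p C j

/-- `st` encodes the decomposition of the blocks `V_0, …, V_{p+1}` into bundles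
`W_0, …, W_{q+1}`: bundle `W_i` consists of the blocks `V_{st i}, …, V_{st (i+1) - 1}`.
`W_0 = V_0`, and each further bundle is greedily either a single connected block, or a
maximal union of contiguous blocks inducing a disconnected subgraph. -/
def IsBundleSeq (ends : E → Sym2 V) (s : V) (p : ℕ) (C : ℕ → Set E)
    (q : ℕ) (st : ℕ → ℕ) : Prop :=
  st 0 = 0 ∧ st 1 = 1 ∧ st (q + 2) = p + 2 ∧
    (∀ i j : ℕ, i < j → j ≤ q + 2 → st i < st j) ∧
    ∀ i : ℕ, 1 ≤ i → i ≤ q + 1 →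
      (st (i + 1) = st i + 1 ∧ ConnIn ends (blockOf ends s p C (st i))) ∨
      (¬ ConnIn ends (blockOf ends s p C (st i)) ∧
        ¬ ConnIn ends (unionBlocks ends s p C (st i) (st (i + 1) - 1)) ∧
        ∀ j : ℕ, st (i + 1) - 1 < j → j ≤ p + 1 →
          ConnIn ends (unionBlocks ends s p C (st i) j))

/-- The bundle `W_i`. -/
def bundleOf (ends : E → Sym2 V) (s : V) (p : ℕ) (C : ℕ → Set E) (st : ℕ → ℕ)
    (i : ℕ) : Set V :=
  unionBlocks ends s p C (st i) (st (i + 1) - 1)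

/-- `C'_i` : the cut (among `C_0, …, C_p`) separating bundle `W_i` from `W_{i+1}`. -/
def interCut (C : ℕ → Set E) (st : ℕ → ℕ) (i : ℕ) : Set E :=
  C (st (i + 1) - 1)

/-- A bundle `W` is unaffected by `Z` if `N[W]` is contained in a single connected
component of `G - Z`. -/
def Unaffected (ends : E → Sym2 V) (Z : Set E) (W : Set V) : Prop :=
  ∀ u ∈ closedNbhd ends W, ∀ v ∈ closedNbhd ends W, Reach ends Z u v

/-- The stretch `W_{a,b} = W_a ∪ ⋯ ∪ W_b` of bundles. -/
def stretchSet (ends : E → Sym2 V) (s : V) (p : ℕ) (C : ℕ → Set E) (st : ℕ → ℕ)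
    (a b : ℕ) : Set V :=
  ⋃ i ∈ Set.Icc a b, bundleOf ends s p C st i

/-- The left interface of a stretch starting at bundle `W_a`. -/
def leftInterface (ends : E → Sym2 V) (s : V) (p : ℕ) (C : ℕ → Set E) (st : ℕ → ℕ)
    (a : ℕ) : Set V :=
  if a = 0 then {s}
  else {v | v ∈ bundleOf ends s p C st a ∧ ∃ e ∈ interCut C st (a - 1), v ∈ ends e}

/-- The right interface of a stretch ending at bundle `W_b`. -/
def rightInterface (ends : E → Sym2 V) (s t : V) (p : ℕ) (C : ℕ → Set E)
    (st : ℕ → ℕ) (q b : ℕ) : Set V :=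
  if b = q + 1 then {t}
  else {v | v ∈ bundleOf ends s p C st b ∧ ∃ e ∈ interCut C st b, v ∈ ends e}

/-- `W_{a,b}` is a maximal stretch of bundles all affected by `Z`. -/
def MaxAffStretch (ends : E → Sym2 V) (s : V) (p : ℕ) (C : ℕ → Set E)
    (st : ℕ → ℕ) (q : ℕ) (Z : Set E) (a b : ℕ) : Prop :=
  a ≤ b ∧ b ≤ q + 1 ∧
    (∀ i : ℕ, a ≤ i → i ≤ b → ¬ Unaffected ends Z (bundleOf ends s p C st i)) ∧
    (a = 0 ∨ Unaffected ends Z (bundleOf ends s p C st (a - 1))) ∧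
    (b = q + 1 ∨ Unaffected ends Z (bundleOf ends s p C st (b + 1)))

/-- `W_{a,b}` is a maximal stretch of bundles affected by `Z` containing both a vertex
reachable from `s` and a vertex reachable from `t` in `G - Z`. -/
def StronglyAffStretch (ends : E → Sym2 V) (s t : V) (p : ℕ) (C : ℕ → Set E)
    (st : ℕ → ℕ) (q : ℕ) (Z : Set E) (a b : ℕ) : Prop :=
  MaxAffStretch ends s p C st q Z a b ∧
    (stretchSet ends s p C st a b ∩ RS ends Z {s}).Nonempty ∧
    (stretchSet ends s p C st a b ∩ RS ends Z {t}).Nonempty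

/-- Adjacency inside the induced subgraph `G[B]` avoiding the edge set `X`. -/
def AdjInX (ends : E → Sym2 V) (B : Set V) (X : Set E) (u v : V) : Prop :=
  u ∈ B ∧ v ∈ B ∧ ∃ e, e ∉ X ∧ ends e = s(u, v)

/-- Reachability inside `G[B] - X`. -/
def ReachInX (ends : E → Sym2 V) (B : Set V) (X : Set E) : V → V → Prop :=
  Relation.ReflTransGen (AdjInX ends B X)

/-- `X` is a star `(a,b)`-cut of the induced subgraph `H = G[B]`: in `H - X` no path
connects `a` and `b`, and every edge of `X` has exactly one endpoint reachable from
`a` in `H - X`. -/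
def IsStarCutIn (ends : E → Sym2 V) (B : Set V) (a b : V) (X : Set E) : Prop :=
  ¬ ReachInX ends B X a b ∧
    ∀ e ∈ X, ∃ u v : V, ends e = s(u, v) ∧
      ReachInX ends B X a u ∧ ¬ ReachInX ends B X a v

end FlowAug

/-!
Every cut of the canonical sequence is a minimum cut, so each of its edges has exactly one
endpoint on the `s`-side. Hence distinct components of a bundle lying beyond `C'_{i-1}` meet
distinct edges of `C'_{i-1}`; since connectivity makes every component meet at least one, there
are at most `λ` of them.

For a component `K` of a middle bundle `W_i = R_s(C'_i) ∖ R_s(C'_{i-1})`, exchanging the edges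
incident with `K` between `C'_{i-1}` and `C'_i` gives two further `(s,t)`-cuts, the boundaries
of `R_s(C'_{i-1}) ∪ K` and of `R_s(C'_i) ∖ K`. Both have at least `λ` edges, which forces `K`
to meet equally many edges of the two cuts; connectivity of `G` makes this number positive.
-/

namespace FlowAug

variable {V E : Type} {ends : E → Sym2 V}

def incidentEdges (ends : E → Sym2 V) (K : Set V) : Set E :=
  {e | ∃ v ∈ K, v ∈ ends e}

theorem mem_incidentEdges {K : Set V} {e : E} {x y : V} (hev : ends e = s(x, y))
    (hx : x ∈ K) : e ∈ incidentEdges ends K :=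
  ⟨x, hx, hev ▸ Sym2.mem_mk_left x y⟩

theorem notMem_incidentEdges {K : Set V} {e : E} {x y : V} (hev : ends e = s(x, y))
    (hx : x ∉ K) (hy : y ∉ K) : e ∉ incidentEdges ends K := by
  rintro ⟨w, hw, hwe⟩
  rw [hev, Sym2.mem_iff] at hwe
  rcases hwe with rfl | rfl <;> contradiction

section Reachability

variable {X : Set E} {s t u v : V}

theorem Adj.symm (h : Adj ends X u v) : Adj ends X v u := by
  obtain ⟨e, he, hev⟩ := h
  exact ⟨e, he, hev.trans Sym2.eq_swap⟩

theorem Reach.symm (h : Reach ends X u v) : Reach ends X v u := by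
  induction h with
  | refl => exact .refl
  | tail _ hab ih => exact ih.head hab.symm

theorem mem_RS_singleton : v ∈ RS ends X {s} ↔ Reach ends X s v := by
  simp [RS]

theorem self_mem_RS (s : V) : s ∈ RS ends X {s} :=
  mem_RS_singleton.2 .refl

theorem mem_RS_of_edge {e : E} (hu : u ∈ RS ends X {s}) (he : e ∉ X)
    (hev : ends e = s(u, v)) : v ∈ RS ends X {s} :=
  mem_RS_singleton.2 ((mem_RS_singleton.1 hu).tail ⟨e, he, hev⟩)

theorem edgeBoundary_RS_subset (s : V) : edgeBoundary ends (RS ends X {s}) ⊆ X := by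
  rintro e ⟨u, v, hev, hu, hv⟩
  by_contra he
  exact hv (mem_RS_of_edge hu he hev)

theorem RS_subset_of_edgeBoundary_subset {S : Set V} (hs : s ∈ S)
    (hS : edgeBoundary ends S ⊆ X) : RS ends X {s} ⊆ S := by
  suffices ∀ v, Reach ends X s v → v ∈ S from fun v hv => this v (mem_RS_singleton.1 hv)
  intro v hv
  induction hv with
  | refl => exact hs
  | @tail a b _ hab ha =>
    obtain ⟨e, he, hev⟩ := hab
    by_contra hb
    exact he (hS ⟨a, b, hev, ha, hb⟩)

theorem edgeBoundary_nonempty (hconn : ∀ u v : V, Reach ends (∅ : Set E) u v) {S : Set V}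
    (hu : u ∈ S) (hv : v ∉ S) : (edgeBoundary ends S).Nonempty := by
  by_contra h
  have hR := RS_subset_of_edgeBoundary_subset (X := ∅) hu
    (Set.not_nonempty_iff_eq_empty.1 h).subset
  exact hv (hR (mem_RS_singleton.2 (hconn u v)))

theorem isCut_iff : IsCut ends X {s} {t} ↔ t ∉ RS ends X {s} := by
  refine ⟨fun h ht => (Set.eq_empty_iff_forall_notMem.1 h) t ⟨ht, self_mem_RS t⟩,
    fun h => Set.eq_empty_iff_forall_notMem.2 ?_⟩
  rintro w ⟨hs, ht⟩
  exact h (mem_RS_singleton.2 ((mem_RS_singleton.1 hs).trans (mem_RS_singleton.1 ht).symm))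

theorem isCut_of_edgeBoundary_subset {S : Set V} (hs : s ∈ S) (ht : t ∉ S)
    (hS : edgeBoundary ends S ⊆ X) : IsCut ends X {s} {t} :=
  isCut_iff.2 fun h => ht (RS_subset_of_edgeBoundary_subset hs hS h)

theorem IsCut.nonempty (hconn : ∀ u v : V, Reach ends (∅ : Set E) u v)
    (hX : IsCut ends X {s} {t}) : X.Nonempty :=
  (edgeBoundary_nonempty hconn (self_mem_RS s) (isCut_iff.1 hX)).mono
    (edgeBoundary_RS_subset s)

end Reachability

section MinimumCuts

variable {X : Set E} {s t : V}

theorem lamCut_le (hX : IsCut ends X {s} {t}) : lamCut ends s t ≤ X.ncard :=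
  Nat.sInf_le ⟨X, hX, rfl⟩

theorem IsMinimumCut.ncard_eq (hX : IsMinimumCut ends X {s} {t}) :
    X.ncard = lamCut ends s t := by
  obtain ⟨Y, hY, hYn⟩ := Nat.sInf_mem
    (⟨_, X, hX.1, rfl⟩ : {n | ∃ Y : Set E, IsCut ends Y {s} {t} ∧ Y.ncard = n}.Nonempty)
  exact le_antisymm ((hX.2 Y hY).trans hYn.le) (lamCut_le hX.1)

theorem IsMinimumCut.one_le_lamCut [Finite E]
    (hconn : ∀ u v : V, Reach ends (∅ : Set E) u v) (hX : IsMinimumCut ends X {s} {t}) :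
    1 ≤ lamCut ends s t :=
  hX.ncard_eq ▸ (Set.ncard_pos X.toFinite).2 (hX.1.nonempty hconn)

/-- If both endpoints of `e ∈ X` were on the same side, `X \ {e}` would be a smaller cut. -/
theorem IsMinimumCut.exists_ends [Finite E] (hX : IsMinimumCut ends X {s} {t}) {e : E}
    (he : e ∈ X) :
    ∃ u v, ends e = s(u, v) ∧ u ∈ RS ends X {s} ∧ v ∉ RS ends X {s} := by
  by_contra! hside
  have hsub : RS ends (X \ {e}) {s} ⊆ RS ends X {s} := by
    refine RS_subset_of_edgeBoundary_subset (self_mem_RS s) ?_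
    rintro f ⟨u, v, hfv, hu, hv⟩
    refine ⟨edgeBoundary_RS_subset s ⟨u, v, hfv, hu, hv⟩, fun hfe => hv ?_⟩
    rw [Set.mem_singleton_iff.1 hfe] at hfv
    exact hside u v hfv hu
  have hcut : IsCut ends (X \ {e}) {s} {t} :=
    isCut_iff.2 fun ht => isCut_iff.1 hX.1 (hsub ht)
  exact (hX.2 _ hcut).not_gt (Set.ncard_sdiff_singleton_lt_of_mem he)

end MinimumCuts

section Components

variable {W K K' : Set V}

theorem AdjIn.symm {u v : V} (h : AdjIn ends W u v) : AdjIn ends W v u := by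
  obtain ⟨hu, hv, e, hev⟩ := h
  exact ⟨hv, hu, e, hev.trans Sym2.eq_swap⟩

theorem ReachIn.symm {u v : V} (h : ReachIn ends W u v) : ReachIn ends W v u := by
  induction h with
  | refl => exact .refl
  | tail _ hab ih => exact ih.head hab.symm

theorem subset_of_mem_componentsIn (hK : K ∈ componentsIn ends W) : K ⊆ W := by
  obtain ⟨u, -, rfl⟩ := hK
  exact fun _ hv => hv.1

theorem nonempty_of_mem_componentsIn (hK : K ∈ componentsIn ends W) : K.Nonempty := by
  obtain ⟨u, hu, rfl⟩ := hK
  exact ⟨u, hu, .refl⟩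

theorem mem_of_mem_componentsIn_of_edge (hK : K ∈ componentsIn ends W) {e : E} {x y : V}
    (hev : ends e = s(x, y)) (hx : x ∈ K) (hy : y ∈ W) : y ∈ K := by
  obtain ⟨u, -, rfl⟩ := hK
  exact ⟨hy, hx.2.tail ⟨hx.1, hy, e, hev⟩⟩

theorem eq_of_mem_componentsIn (hK : K ∈ componentsIn ends W) (hK' : K' ∈ componentsIn ends W)
    {v : V} (hv : v ∈ K) (hv' : v ∈ K') : K = K' := by
  obtain ⟨u, -, rfl⟩ := hK
  obtain ⟨u', -, rfl⟩ := hK'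
  ext x
  constructor
  · exact fun ⟨hx, hux⟩ => ⟨hx, hv'.2.trans (hv.2.symm.trans hux)⟩
  · exact fun ⟨hx, hux⟩ => ⟨hx, hv.2.trans (hv'.2.symm.trans hux)⟩

theorem componentsIn_subset_singleton (hW : ConnIn ends W) : componentsIn ends W ⊆ {W} := by
  rintro K ⟨u, hu, rfl⟩
  exact Set.Subset.antisymm (fun _ hv => hv.1) fun v hv => ⟨hv, hW u hu v hv⟩

theorem ncard_componentsIn_le_one (hW : ConnIn ends W) : (componentsIn ends W).ncard ≤ 1 :=
  (Set.ncard_le_ncard (componentsIn_subset_singleton hW)).trans (Set.ncard_singleton W).le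

theorem connIn_RS (X : Set E) (s : V) : ConnIn ends (RS ends X {s}) := by
  have hfrom_s : ∀ v, Reach ends X s v → ReachIn ends (RS ends X {s}) s v := by
    intro v hv
    induction hv with
    | refl => exact .refl
    | @tail b c hb hbc ih =>
      obtain ⟨e, he, hev⟩ := hbc
      have hb' := mem_RS_singleton.2 hb
      exact ih.tail ⟨hb', mem_RS_of_edge hb' he hev, e, hev⟩
  intro u hu v hv
  exact (hfrom_s u (mem_RS_singleton.1 hu)).symm.trans (hfrom_s v (mem_RS_singleton.1 hv))

theorem eq_of_mem_incidentEdges_of_isMinimumCut [Finite E] {X : Set E} {s t : V}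
    (hX : IsMinimumCut ends X {s} {t}) (hW : Disjoint W (RS ends X {s}))
    (hK : K ∈ componentsIn ends W) (hK' : K' ∈ componentsIn ends W) {e : E} (he : e ∈ X)
    (heK : e ∈ incidentEdges ends K) (heK' : e ∈ incidentEdges ends K') : K = K' := by
  obtain ⟨u, v, hev, hu, -⟩ := hX.exists_ends he
  have houter : ∀ {L}, L ∈ componentsIn ends W → e ∈ incidentEdges ends L → v ∈ L := by
    rintro L hL ⟨w, hw, hwe⟩
    rw [hev, Sym2.mem_iff] at hwe
    rcases hwe with rfl | rfl
    · exact absurd hu (hW.notMem_of_mem_left (subset_of_mem_componentsIn hL hw))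
    · exact hw
  exact eq_of_mem_componentsIn hK hK' (houter hK heK) (houter hK' heK')

theorem ncard_componentsIn_le_lamCut [Finite E] {X : Set E} {s t : V}
    (hX : IsMinimumCut ends X {s} {t}) (hW : Disjoint W (RS ends X {s}))
    (hmeet : ∀ K ∈ componentsIn ends W, ∃ e, e ∈ X ∩ incidentEdges ends K) :
    (componentsIn ends W).ncard ≤ lamCut ends s t := by
  rcases (componentsIn ends W).eq_empty_or_nonempty with hempty | ⟨K, hK⟩
  · simp [hempty]
  obtain ⟨e, -⟩ := hmeet K hK
  have : Nonempty E := ⟨e⟩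
  choose! f hf using hmeet
  refine hX.ncard_eq ▸ Set.ncard_le_ncard_of_injOn f (fun K hK => (hf K hK).1) ?_
  intro K hK K' hK' hff
  exact eq_of_mem_incidentEdges_of_isMinimumCut hX hW hK hK' (hf K hK).1 (hf K hK).2
    (hff ▸ (hf K' hK').2)

end Components

section Exchange

variable {X Y : Set E} {s t : V} {K : Set V}

theorem ncard_inter_eq_of_exchange [Finite E] {I : Set E} (hX : IsMinimumCut ends X {s} {t})
    (hY : IsMinimumCut ends Y {s} {t}) (hXY : IsCut ends ((X \ I) ∪ (Y ∩ I)) {s} {t})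
    (hYX : IsCut ends ((Y \ I) ∪ (X ∩ I)) {s} {t}) : (X ∩ I).ncard = (Y ∩ I).ncard := by
  have h₁ := (lamCut_le hXY).trans (Set.ncard_union_le _ _)
  have h₂ := (lamCut_le hYX).trans (Set.ncard_union_le _ _)
  have hX' := Set.ncard_inter_add_ncard_sdiff_eq_ncard X I
  have hY' := Set.ncard_inter_add_ncard_sdiff_eq_ncard Y I
  rw [hX.ncard_eq] at hX'
  rw [hY.ncard_eq] at hY'
  omega

theorem mem_or_mem_of_edge_of_mem_componentsIn_sdiff
    (hK : K ∈ componentsIn ends (RS ends Y {s} \ RS ends X {s})) {e : E} {x y : V}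
    (hev : ends e = s(x, y)) (hx : x ∈ K) (hy : y ∉ K) :
    (e ∈ X ∧ y ∈ RS ends X {s}) ∨ (e ∈ Y ∧ y ∉ RS ends Y {s}) := by
  have hxW := subset_of_mem_componentsIn hK hx
  by_cases hyX : y ∈ RS ends X {s}
  · exact .inl ⟨edgeBoundary_RS_subset s ⟨y, x, hev.trans Sym2.eq_swap, hyX, hxW.2⟩, hyX⟩
  · have hyY : y ∉ RS ends Y {s} := fun hyY =>
      hy (mem_of_mem_componentsIn_of_edge hK hev hx ⟨hyY, hyX⟩)
    exact .inr ⟨edgeBoundary_RS_subset s ⟨x, y, hev, hxW.1, hyY⟩, hyY⟩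

theorem isCut_exchange_left (hK : K ∈ componentsIn ends (RS ends Y {s} \ RS ends X {s}))
    (hX : IsCut ends X {s} {t}) (hY : IsCut ends Y {s} {t}) :
    IsCut ends ((X \ incidentEdges ends K) ∪ (Y ∩ incidentEdges ends K)) {s} {t} := by
  have hKY : K ⊆ RS ends Y {s} := fun x hx => (subset_of_mem_componentsIn hK hx).1
  refine isCut_of_edgeBoundary_subset (S := RS ends X {s} ∪ K) (.inl (self_mem_RS s))
    (fun ht => ht.elim (isCut_iff.1 hX) fun htK => isCut_iff.1 hY (hKY htK)) ?_
  rintro e ⟨x, y, hev, hx | hx, hy⟩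
  · have hxK : x ∉ K := fun hxK => (subset_of_mem_componentsIn hK hxK).2 hx
    refine .inl ⟨edgeBoundary_RS_subset s ⟨x, y, hev, hx, fun h => hy (.inl h)⟩, ?_⟩
    exact notMem_incidentEdges hev hxK fun h => hy (.inr h)
  · rcases mem_or_mem_of_edge_of_mem_componentsIn_sdiff hK hev hx (fun h => hy (.inr h)) with
      ⟨-, hyX⟩ | ⟨he, -⟩
    · exact absurd (.inl hyX) hy
    · exact .inr ⟨he, mem_incidentEdges hev hx⟩

theorem isCut_exchange_right (hK : K ∈ componentsIn ends (RS ends Y {s} \ RS ends X {s}))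
    (hY : IsCut ends Y {s} {t}) :
    IsCut ends ((Y \ incidentEdges ends K) ∪ (X ∩ incidentEdges ends K)) {s} {t} := by
  refine isCut_of_edgeBoundary_subset (S := RS ends Y {s} \ K)
    ⟨self_mem_RS s, fun hs => (subset_of_mem_componentsIn hK hs).2 (self_mem_RS s)⟩
    (fun ht => isCut_iff.1 hY ht.1) ?_
  rintro e ⟨x, y, hev, hx, hy⟩
  by_cases hyK : y ∈ K
  · rcases mem_or_mem_of_edge_of_mem_componentsIn_sdiff hK (hev.trans Sym2.eq_swap) hyK hx.2 with
      ⟨he, -⟩ | ⟨-, hxY⟩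
    · exact .inr ⟨he, mem_incidentEdges (hev.trans Sym2.eq_swap) hyK⟩
    · exact absurd hx.1 hxY
  · refine .inl ⟨edgeBoundary_RS_subset s ⟨x, y, hev, hx.1, fun h => hy ⟨h, hyK⟩⟩, ?_⟩
    exact notMem_incidentEdges hev hx.2 hyK

theorem ncard_inter_incidentEdges_eq [Finite E] (hX : IsMinimumCut ends X {s} {t})
    (hY : IsMinimumCut ends Y {s} {t})
    (hK : K ∈ componentsIn ends (RS ends Y {s} \ RS ends X {s})) :
    (X ∩ incidentEdges ends K).ncard = (Y ∩ incidentEdges ends K).ncard :=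
  ncard_inter_eq_of_exchange hX hY (isCut_exchange_left hK hX.1 hY.1)
    (isCut_exchange_right hK hY.1)

theorem one_le_ncard_inter_incidentEdges [Finite E]
    (hconn : ∀ u v : V, Reach ends (∅ : Set E) u v) (hX : IsMinimumCut ends X {s} {t})
    (hY : IsMinimumCut ends Y {s} {t})
    (hK : K ∈ componentsIn ends (RS ends Y {s} \ RS ends X {s})) :
    1 ≤ (X ∩ incidentEdges ends K).ncard := by
  obtain ⟨u, hu⟩ := nonempty_of_mem_componentsIn hK
  have hsK : s ∉ K := fun hs => (subset_of_mem_componentsIn hK hs).2 (self_mem_RS s)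
  obtain ⟨e, x, y, hev, hx, hy⟩ := edgeBoundary_nonempty hconn hu hsK
  rcases mem_or_mem_of_edge_of_mem_componentsIn_sdiff hK hev hx hy with ⟨he, -⟩ | ⟨he, -⟩
  · exact (Set.ncard_pos (Set.toFinite _)).2 ⟨e, he, mem_incidentEdges hev hx⟩
  · rw [ncard_inter_incidentEdges_eq hX hY hK]
    exact (Set.ncard_pos (Set.toFinite _)).2 ⟨e, he, mem_incidentEdges hev hx⟩

end Exchange

theorem exists_mem_inter_incidentEdges_of_mem_componentsIn_compl
    (hconn : ∀ u v : V, Reach ends (∅ : Set E) u v) {X : Set E} {s : V} {K : Set V}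
    (hK : K ∈ componentsIn ends (RS ends X {s})ᶜ) :
    ∃ e, e ∈ X ∩ incidentEdges ends K := by
  obtain ⟨u, hu⟩ := nonempty_of_mem_componentsIn hK
  have hsK : s ∉ K := fun hs => subset_of_mem_componentsIn hK hs (self_mem_RS s)
  obtain ⟨e, x, y, hev, hx, hy⟩ := edgeBoundary_nonempty hconn hu hsK
  have hyX : y ∈ RS ends X {s} := by
    by_contra hyX
    exact hy (mem_of_mem_componentsIn_of_edge hK hev hx hyX)
  exact ⟨e, edgeBoundary_RS_subset s ⟨y, x, hev.trans Sym2.eq_swap, hyX,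
    subset_of_mem_componentsIn hK hx⟩, mem_incidentEdges hev hx⟩

section CanonicalSequence

variable {s t : V} {p : ℕ} {C : ℕ → Set E}

theorem CanonSeq.isMinimumCut (hC : CanonSeq ends s t p C) {j : ℕ} (hj : j ≤ p) :
    IsMinimumCut ends (C j) {s} {t} := by
  rcases Nat.eq_zero_or_pos j with rfl | hj0
  · exact hC.1.1
  · exact (hC.2.1 j hj0 hj).1

theorem CanonSeq.RS_mono (hC : CanonSeq ends s t p C) {j j' : ℕ} (hjj : j ≤ j')
    (hj' : j' ≤ p) : RS ends (C j) {s} ⊆ RS ends (C j') {s} := by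
  induction j', hjj using Nat.le_induction with
  | base => exact subset_rfl
  | succ n hn ih =>
    exact (ih (by omega)).trans
      (Set.subset_union_left.trans (hC.2.1 (n + 1) (by omega) hj').2.1)

theorem unionBlocks_succ_right {a n : ℕ} (h : a ≤ n + 1) :
    unionBlocks ends s p C a (n + 1) =
      unionBlocks ends s p C a n ∪ blockOf ends s p C (n + 1) := by
  have hIcc : Set.Icc a (n + 1) = Set.Icc a n ∪ {n + 1} := by
    ext x
    simp only [Set.mem_Icc, Set.mem_union, Set.mem_singleton_iff]
    omega
  rw [unionBlocks, unionBlocks, hIcc, Set.biUnion_union, Set.biUnion_singleton]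

theorem unionBlocks_zero_zero : unionBlocks ends s p C 0 0 = RS ends (C 0) {s} := by
  simp [unionBlocks, blockOf]

theorem CanonSeq.unionBlocks_eq_sdiff (hC : CanonSeq ends s t p C) {m m' : ℕ} (hmm : m ≤ m')
    (hm' : m' ≤ p) :
    unionBlocks ends s p C (m + 1) m' = RS ends (C m') {s} \ RS ends (C m) {s} := by
  induction m', hmm using Nat.le_induction with
  | base => simp [unionBlocks]
  | succ n hn ih =>
    rw [unionBlocks_succ_right (by omega), ih (by omega), blockOf, if_neg (by omega),
      if_pos hm', Nat.add_sub_cancel, Set.union_comm]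
    exact Set.sdiff_union_sdiff_cancel (hC.RS_mono (by omega) hm') (hC.RS_mono hn (by omega))

theorem CanonSeq.unionBlocks_eq_compl (hC : CanonSeq ends s t p C) {m : ℕ} (hm : m ≤ p) :
    unionBlocks ends s p C (m + 1) (p + 1) = (RS ends (C m) {s})ᶜ := by
  rw [unionBlocks_succ_right (by omega), hC.unionBlocks_eq_sdiff hm le_rfl, blockOf,
    if_neg (by omega), if_neg (by omega), Set.union_comm,
    Set.sdiff_union_sdiff_cancel (Set.subset_univ _) (hC.RS_mono hm le_rfl),
    Set.compl_eq_univ_sdiff]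

end CanonicalSequence

section Bundles

variable {s t : V} {p q : ℕ} {C : ℕ → Set E} {st : ℕ → ℕ}

theorem IsBundleSeq.st_bounds (hW : IsBundleSeq ends s p C q st) {i : ℕ} (h1 : 1 ≤ i)
    (hi : i ≤ q + 1) : 1 ≤ st i ∧ st i < st (i + 1) ∧ st (i + 1) ≤ p + 2 := by
  obtain ⟨-, hst1, hstq, hmono, -⟩ := hW
  refine ⟨?_, hmono i (i + 1) (by omega) (by omega), ?_⟩
  · rcases h1.eq_or_lt with rfl | h
    · omega
    · exact hst1 ▸ (hmono 1 i h (by omega)).le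
  · rcases (show i + 1 ≤ q + 2 by omega).eq_or_lt with h | h
    · rw [h, hstq]
    · exact (hmono _ _ h le_rfl).le.trans hstq.le

theorem IsBundleSeq.interCut_index_le (hW : IsBundleSeq ends s p C q st) {i : ℕ}
    (hi : i ≤ q) : st (i + 1) - 1 ≤ p := by
  have := hW.st_bounds (i := i + 1) (by omega) (by omega)
  omega

theorem isMinimumCut_interCut (hC : CanonSeq ends s t p C) (hW : IsBundleSeq ends s p C q st)
    {i : ℕ} (hi : i ≤ q) : IsMinimumCut ends (interCut C st i) {s} {t} :=
  hC.isMinimumCut (hW.interCut_index_le hi)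

theorem IsBundleSeq.bundleOf_zero (hW : IsBundleSeq ends s p C q st) :
    bundleOf ends s p C st 0 = RS ends (interCut C st 0) {s} := by
  rw [bundleOf, interCut, zero_add, hW.1, hW.2.1]
  exact unionBlocks_zero_zero

theorem bundleOf_eq_sdiff (hC : CanonSeq ends s t p C) (hW : IsBundleSeq ends s p C q st)
    {i : ℕ} (h1 : 1 ≤ i) (hi : i ≤ q) :
    bundleOf ends s p C st i =
      RS ends (interCut C st i) {s} \ RS ends (interCut C st (i - 1)) {s} := by
  obtain ⟨hpos, hlt, -⟩ := hW.st_bounds h1 (by omega)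
  have hidx : st i = st (i - 1 + 1) - 1 + 1 := by rw [Nat.sub_add_cancel h1]; omega
  rw [bundleOf, interCut, interCut, hidx]
  exact hC.unionBlocks_eq_sdiff (by omega) (hW.interCut_index_le hi)

theorem bundleOf_last (hC : CanonSeq ends s t p C) (hW : IsBundleSeq ends s p C q st) :
    bundleOf ends s p C st (q + 1) = (RS ends (interCut C st q) {s})ᶜ := by
  have hm := hW.interCut_index_le le_rfl
  obtain ⟨m, hidx⟩ : ∃ m, st (q + 1) = m + 1 :=
    Nat.exists_eq_add_one.2 (hW.st_bounds (i := q + 1) (by omega) le_rfl).1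
  rw [bundleOf, interCut, hW.2.2.1, hidx, show p + 2 - 1 = p + 1 by omega,
    Nat.add_sub_cancel]
  rw [hidx, Nat.add_sub_cancel] at hm
  exact hC.unionBlocks_eq_compl hm

end Bundles

theorem bundles_components_structure_general {V E : Type} [Fintype E]
    (ends : E → Sym2 V)
    (hconn : ∀ u v : V, Reach ends (∅ : Set E) u v)
    (s t : V)
    (p : ℕ) (C : ℕ → Set E) (hC : CanonSeq ends s t p C)
    (q : ℕ) (st : ℕ → ℕ) (hW : IsBundleSeq ends s p C q st) :
    (∀ i : ℕ, i ≤ q + 1 →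
      (componentsIn ends (bundleOf ends s p C st i)).ncard ≤ lamCut ends s t) ∧
    (∀ i : ℕ, 1 ≤ i → i ≤ q →
      ∀ K ∈ componentsIn ends (bundleOf ends s p C st i),
        ∃ c : ℕ, 1 ≤ c ∧
          {e | e ∈ interCut C st (i - 1) ∧ ∃ v ∈ K, v ∈ ends e}.ncard = c ∧
          {e | e ∈ interCut C st i ∧ ∃ v ∈ K, v ∈ ends e}.ncard = c) ∧
    (∀ e ∈ interCut C st 0, ∃ v ∈ bundleOf ends s p C st 0, v ∈ ends e) ∧
    (∀ e ∈ interCut C st q, ∃ v ∈ bundleOf ends s p C st (q + 1), v ∈ ends e) := by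
  have hmin {i : ℕ} (hi : i ≤ q) := isMinimumCut_interCut hC hW hi
  have hmiddle {i : ℕ} (h1 : 1 ≤ i) (hi : i ≤ q) {K : Set V}
      (hK : K ∈ componentsIn ends (bundleOf ends s p C st i)) :
      1 ≤ (interCut C st (i - 1) ∩ incidentEdges ends K).ncard ∧
        (interCut C st (i - 1) ∩ incidentEdges ends K).ncard =
          (interCut C st i ∩ incidentEdges ends K).ncard := by
    rw [bundleOf_eq_sdiff hC hW h1 hi] at hK
    exact ⟨one_le_ncard_inter_incidentEdges hconn (hmin (by omega)) (hmin hi) hK,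
      ncard_inter_incidentEdges_eq (hmin (by omega)) (hmin hi) hK⟩
  refine ⟨fun i hi => ?_, fun i h1 hi K hK => ⟨_, (hmiddle h1 hi hK).1, rfl,
    (hmiddle h1 hi hK).2.symm⟩, fun e he => ?_, fun e he => ?_⟩
  · rcases Nat.eq_zero_or_pos i with rfl | h1
    · rw [hW.bundleOf_zero]
      exact (ncard_componentsIn_le_one (connIn_RS _ s)).trans
        ((hmin (Nat.zero_le q)).one_le_lamCut hconn)
    rcases hi.lt_or_eq with hi | rfl
    · refine ncard_componentsIn_le_lamCut (hmin (i := i - 1) (by omega)) ?_ fun K hK =>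
        (Set.ncard_pos (Set.toFinite _)).1 (hmiddle h1 (by omega) hK).1
      rw [bundleOf_eq_sdiff hC hW h1 (by omega)]
      exact Set.disjoint_sdiff_left
    · rw [bundleOf_last hC hW]
      exact ncard_componentsIn_le_lamCut (hmin le_rfl) disjoint_compl_left
        fun K hK => exists_mem_inter_incidentEdges_of_mem_componentsIn_compl hconn hK
  · obtain ⟨u, v, hev, hu, -⟩ := (hmin (Nat.zero_le q)).exists_ends he
    exact ⟨u, hW.bundleOf_zero ▸ hu, hev ▸ Sym2.mem_mk_left u v⟩
  · obtain ⟨u, v, hev, -, hv⟩ := (hmin le_rfl).exists_ends he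
    exact ⟨v, (bundleOf_last hC hW).symm ▸ hv, hev ▸ Sym2.mem_mk_right u v⟩

/-- With `W_0, …, W_{q+1}` the bundles of a connected multigraph `G`
(encoded by the block-boundary function `st`) and `C'_0, …, C'_q` the inter-bundle
cuts: each bundle induces at most `λ = λ_G(s,t)` connected components; for `1 ≤ i ≤ q`
each component of `G[W_i]` is incident with some number `c ≥ 1` of edges of `C'_{i-1}`
and exactly `c` edges of `C'_i`; `W_0` is incident with all `λ` edges of `C'_0` and
`W_{q+1}` with all `λ` edges of `C'_q`. -/
theorem bundles_components_structure {V E : Type} [Fintype V] [Fintype E]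
    (ends : E → Sym2 V) (hloop : ∀ e, ¬ (ends e).IsDiag)
    (hconn : ∀ u v : V, Reach ends (∅ : Set E) u v)
    (s t : V) (hst : s ≠ t)
    (p : ℕ) (C : ℕ → Set E) (hC : CanonSeq ends s t p C)
    (q : ℕ) (st : ℕ → ℕ) (hW : IsBundleSeq ends s p C q st) :
    (∀ i : ℕ, i ≤ q + 1 →
      (componentsIn ends (bundleOf ends s p C st i)).ncard ≤ lamCut ends s t) ∧
    (∀ i : ℕ, 1 ≤ i → i ≤ q →
      ∀ K ∈ componentsIn ends (bundleOf ends s p C st i),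
        ∃ c : ℕ, 1 ≤ c ∧
          {e | e ∈ interCut C st (i - 1) ∧ ∃ v ∈ K, v ∈ ends e}.ncard = c ∧
          {e | e ∈ interCut C st i ∧ ∃ v ∈ K, v ∈ ends e}.ncard = c) ∧
    (∀ e ∈ interCut C st 0, ∃ v ∈ bundleOf ends s p C st 0, v ∈ ends e) ∧
    (∀ e ∈ interCut C st q, ∃ v ∈ bundleOf ends s p C st (q + 1), v ∈ ends e) :=
  bundles_components_structure_general ends hconn s t p C hC q st hW

end FlowAug
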